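/- Any 3×3 positive semidefinite matrix π acting on the second tensor factor that satisfies ⟨ψ_i|(I⊗π⊗I)|ψ_j⟩ = 0 for all distinct pairs of the twelve product states |1⟩|2⟩|1±2⟩, |1⟩|3⟩|1±3⟩, |2⟩|1±2⟩|1⟩, |3⟩|1±3⟩|1⟩, |1±2⟩|1⟩|2⟩, |1±3⟩|1⟩|3⟩ on ℂ³⊗ℂ³⊗ℂ³ is a scalar multiple of the 3×3 identity. -/

import Mathlib

open scoped BigOperators ComplexOrder

noncomputable section

def e3 (i : Fin 3) : Fin 3 → ℂ := fun j => if j = i then 1 else 0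

def tp3 (a b c : Fin 3 → ℂ) : Fin 3 → Fin 3 → Fin 3 → ℂ := fun i j k => a i * b j * c k

def ip3 (ψ φ : Fin 3 → Fin 3 → Fin 3 → ℂ) : ℂ := ∑ i, ∑ j, ∑ k, star (ψ i j k) * φ i j k

def states12 : Fin 12 → (Fin 3 → Fin 3 → Fin 3 → ℂ) :=
  ![tp3 (e3 0) (e3 1) (e3 0 + e3 1),
  tp3 (e3 0) (e3 1) (e3 0 - e3 1),
  tp3 (e3 0) (e3 2) (e3 0 + e3 2),
  tp3 (e3 0) (e3 2) (e3 0 - e3 2),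
  tp3 (e3 1) (e3 0 + e3 1) (e3 0),
  tp3 (e3 1) (e3 0 - e3 1) (e3 0),
  tp3 (e3 2) (e3 0 + e3 2) (e3 0),
  tp3 (e3 2) (e3 0 - e3 2) (e3 0),
  tp3 (e3 0 + e3 1) (e3 0) (e3 1),
  tp3 (e3 0 - e3 1) (e3 0) (e3 1),
  tp3 (e3 0 + e3 2) (e3 0) (e3 2),
  tp3 (e3 0 - e3 2) (e3 0) (e3 2)]

def act2 (π : Matrix (Fin 3) (Fin 3) ℂ) (ψ : Fin 3 → Fin 3 → Fin 3 → ℂ) :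
    Fin 3 → Fin 3 → Fin 3 → ℂ :=
  fun i j k => ∑ j', π j j' * ψ i j' k

/-!
The inner product of two product states with `π` on the middle factor factorises as
`⟨a|a'⟩ ⟨b|π|b'⟩ ⟨c|c'⟩`. Pairs of the twelve states whose outer factors are non-orthogonal
thus turn orthogonality into conditions on `π` alone: pairs such as `|1⟩|2⟩|1+2⟩` and
`|1⟩|3⟩|1+3⟩` kill every off-diagonal entry, and then `⟨1+2|π|1−2⟩ = 0` and
`⟨1+3|π|1−3⟩ = 0` force `π₂₂ = π₁₁` and `π₃₃ = π₁₁`.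
-/

open Matrix

theorem Matrix.eq_smul_one_of_offDiag_eq_zero {n R : Type*} [DecidableEq n] [Semiring R]
    (A : Matrix n n R) (i₀ : n) (hoff : ∀ i j, i ≠ j → A i j = 0)
    (hdiag : ∀ i, A i i = A i₀ i₀) : A = A i₀ i₀ • (1 : Matrix n n R) := by
  ext i j
  by_cases hij : i = j
  · subst hij
    simp [hdiag]
  · simp [hoff i j hij, hij]

lemma e3_eq_single (i : Fin 3) : e3 i = Pi.single i 1 := by
  ext j
  simp [e3, Pi.single_apply]

lemma ip3_tp3_act2_tp3 (π : Matrix (Fin 3) (Fin 3) ℂ) (a b c a' b' c' : Fin 3 → ℂ) :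
    ip3 (tp3 a b c) (act2 π (tp3 a' b' c')) =
      (star a ⬝ᵥ a') * (star b ⬝ᵥ π *ᵥ b') * (star c ⬝ᵥ c') := by
  simp only [ip3, tp3, act2, dotProduct, mulVec, Pi.star_apply, Fin.sum_univ_three, star_mul]
  ring

lemma eq_zero_of_ne_of_states12_orthogonal (π : Matrix (Fin 3) (Fin 3) ℂ)
    (h : ∀ x y : Fin 12, x ≠ y → ip3 (states12 x) (act2 π (states12 y)) = 0)
    (i j : Fin 3) (hij : i ≠ j) : π i j = 0 := by
  fin_cases i <;> fin_cases j <;> simp only [ne_eq, not_true_eq_false] at hij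
  · simpa [states12, ip3_tp3_act2_tp3, e3_eq_single] using h 8 0 (by decide)
  · simpa [states12, ip3_tp3_act2_tp3, e3_eq_single] using h 10 2 (by decide)
  · simpa [states12, ip3_tp3_act2_tp3, e3_eq_single] using h 0 8 (by decide)
  · simpa [states12, ip3_tp3_act2_tp3, e3_eq_single] using h 0 2 (by decide)
  · simpa [states12, ip3_tp3_act2_tp3, e3_eq_single] using h 2 10 (by decide)
  · simpa [states12, ip3_tp3_act2_tp3, e3_eq_single] using h 2 0 (by decide)

lemma diag_eq_of_states12_orthogonal (π : Matrix (Fin 3) (Fin 3) ℂ)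
    (h : ∀ x y : Fin 12, x ≠ y → ip3 (states12 x) (act2 π (states12 y)) = 0)
    (i : Fin 3) : π i i = π 0 0 := by
  have hoff := eq_zero_of_ne_of_states12_orthogonal π h
  fin_cases i
  · rfl
  · show π 1 1 = π 0 0
    refine (sub_eq_zero.mp ?_).symm
    simpa [states12, ip3_tp3_act2_tp3, e3_eq_single, mulVec_sub, hoff 1 0, hoff 0 1]
      using h 4 5 (by decide)
  · show π 2 2 = π 0 0
    refine (sub_eq_zero.mp ?_).symm
    simpa [states12, ip3_tp3_act2_tp3, e3_eq_single, mulVec_sub, hoff 2 0, hoff 0 2]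
      using h 6 7 (by decide)

theorem twelve_states_second_party_trivial_general (π : Matrix (Fin 3) (Fin 3) ℂ)
    (h : ∀ x y : Fin 12, x ≠ y → ip3 (states12 x) (act2 π (states12 y)) = 0) :
    ∃ c : ℂ, π = c • (1 : Matrix (Fin 3) (Fin 3) ℂ) :=
  ⟨π 0 0, π.eq_smul_one_of_offDiag_eq_zero 0 (eq_zero_of_ne_of_states12_orthogonal π h)
    (diag_eq_of_states12_orthogonal π h)⟩

/-- Any 3×3 PSD matrix acting on the second (middle) factor that preserves the
pairwise orthogonality of the twelve product states is a scalar multiple of the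
identity. -/
theorem twelve_states_second_party_trivial (π : Matrix (Fin 3) (Fin 3) ℂ)
    (hπ : π.PosSemidef)
    (h : ∀ x y : Fin 12, x ≠ y → ip3 (states12 x) (act2 π (states12 y)) = 0) :
    ∃ c : ℂ, π = c • (1 : Matrix (Fin 3) (Fin 3) ℂ) :=
  twelve_states_second_party_trivial_general π h
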